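/- In the braid group Br_{n+1}, for i < j, ℓ_{i,j}² = ℓ_{i+1,j}² · (s_i ··· s_j)(s_j ··· s_i) = (s_i ··· s_j)(s_j ··· s_i) · ℓ_{i+1,j}². -/
import Mathlib


namespace BraidPaper

/-- The braid relations on `n` generators `s_1, ..., s_n` (indexed by `Fin n`):
far-away commutativity and the braid relation for adjacent generators.  The
corresponding presented group is the Artin braid group `Br_{n+1}`. -/
def braidRelsSet (n : ℕ) : Set (FreeGroup (Fin n)) :=
  {r | (∃ i j : Fin n, (i : ℕ) + 2 ≤ (j : ℕ) ∧
        r = FreeGroup.of i * FreeGroup.of j * (FreeGroup.of i)⁻¹ * (FreeGroup.of j)⁻¹) ∨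
       (∃ i j : Fin n, (i : ℕ) + 1 = (j : ℕ) ∧
        r = FreeGroup.of i * FreeGroup.of j * FreeGroup.of i *
            (FreeGroup.of j)⁻¹ * (FreeGroup.of i)⁻¹ * (FreeGroup.of j)⁻¹)}

/-- The Artin braid group `Br_{n+1}` on generators `s_1, ..., s_n`. -/
abbrev BraidGroup (n : ℕ) := PresentedGroup (braidRelsSet n)

/-- The generator `s_i` of `Br_{n+1}`, for `1 ≤ i ≤ n` (junk value `1` otherwise). -/
def gen (n : ℕ) (i : ℕ) : BraidGroup n :=
  if h : 1 ≤ i ∧ i ≤ n then PresentedGroup.of (⟨i - 1, by omega⟩ : Fin n) else 1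

/-- The descending product `s_j s_{j-1} ⋯ s_i` (equal to `1` if `j < i`). -/
def desc (n j i : ℕ) : BraidGroup n :=
  (((List.range' i (j + 1 - i)).reverse).map (gen n)).prod

/-- The ascending product `s_i s_{i+1} ⋯ s_j` (equal to `1` if `j < i`). -/
def asc (n i j : ℕ) : BraidGroup n :=
  ((List.range' i (j + 1 - i)).map (gen n)).prod

/-- The standard lift `ℓ_{i,j} = (s_i)(s_{i+1}s_i)⋯(s_j⋯s_i)` of the longest element
over the interval `[i,j]`, with the convention `ℓ_{i,j} = 1` when `j < i`. -/
def ell (n i j : ℕ) : BraidGroup n :=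
  ((List.range' i (j + 1 - i)).map (fun k => desc n k i)).prod

/-! ### Auxiliary lemmas -/

lemma rel_eq_one {n : ℕ} {r : FreeGroup (Fin n)} (h : r ∈ braidRelsSet n) :
    PresentedGroup.mk (braidRelsSet n) r = 1 := by
  have : r ∈ Subgroup.normalClosure (braidRelsSet n) := Subgroup.subset_normalClosure h
  exact (QuotientGroup.eq_one_iff r).mpr this

/-- far commutation of generators -/
lemma gen_comm {n : ℕ} (a b : ℕ) (h : a + 2 ≤ b) : Commute (gen n a) (gen n b) := by
  unfold gen
  split_ifs with h1 h2 h2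
  · set x : Fin n := ⟨a - 1, by omega⟩
    set y : Fin n := ⟨b - 1, by omega⟩
    have hrel : FreeGroup.of x * FreeGroup.of y * (FreeGroup.of x)⁻¹ * (FreeGroup.of y)⁻¹
        ∈ braidRelsSet n := Or.inl ⟨x, y, by simp [x, y]; omega, rfl⟩
    have hone := rel_eq_one hrel
    rw [map_mul, map_mul, map_mul, map_inv, map_inv, mul_inv_eq_one,
      mul_inv_eq_iff_eq_mul] at hone
    exact hone
  · exact Commute.one_right _
  · exact Commute.one_left _
  · exact Commute.one_left _

/-- braid relation -/
lemma gen_braid {n : ℕ} (k : ℕ) (h1 : 1 ≤ k) (h2 : k + 1 ≤ n) :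
    gen n k * gen n (k + 1) * gen n k = gen n (k + 1) * gen n k * gen n (k + 1) := by
  have e1 : gen n k = PresentedGroup.of (⟨k - 1, by omega⟩ : Fin n) := by
    unfold gen; rw [dif_pos ⟨h1, by omega⟩]
  have e2 : gen n (k + 1) = PresentedGroup.of (⟨k, by omega⟩ : Fin n) := by
    unfold gen; rw [dif_pos ⟨by omega, h2⟩]; congr 1
  set x : Fin n := ⟨k - 1, by omega⟩
  set y : Fin n := ⟨k, by omega⟩
  have hrel : FreeGroup.of x * FreeGroup.of y * FreeGroup.of x *
      (FreeGroup.of y)⁻¹ * (FreeGroup.of x)⁻¹ * (FreeGroup.of y)⁻¹ ∈ braidRelsSet n :=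
    Or.inr ⟨x, y, by simp [x, y]; omega, rfl⟩
  have h0 := rel_eq_one hrel
  rw [map_mul, map_mul, map_mul, map_mul, map_mul, map_inv, map_inv,
    mul_inv_eq_one, mul_inv_eq_iff_eq_mul, mul_inv_eq_iff_eq_mul] at h0
  rw [e1, e2]
  exact h0

lemma gen_braid' {n : ℕ} (k : ℕ) (h1 : 1 ≤ k) (h2 : k + 1 ≤ n) :
    gen n k * (gen n (k + 1) * gen n k) = gen n (k + 1) * (gen n k * gen n (k + 1)) := by
  rw [← mul_assoc, gen_braid k h1 h2, mul_assoc]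

/-! ### Recursions for `asc`, `desc`, `ell` -/

lemma asc_eq_one {n i j : ℕ} (h : j < i) : asc n i j = 1 := by
  unfold asc; rw [show j + 1 - i = 0 by omega]; simp

lemma desc_eq_one {n i j : ℕ} (h : j < i) : desc n j i = 1 := by
  unfold desc; rw [show j + 1 - i = 0 by omega]; simp

lemma ell_eq_one {n i j : ℕ} (h : j < i) : ell n i j = 1 := by
  unfold ell; rw [show j + 1 - i = 0 by omega]; simp

lemma asc_self (n i : ℕ) : asc n i i = gen n i := by
  unfold asc; rw [show i + 1 - i = 1 by omega]; simp

lemma desc_self (n i : ℕ) : desc n i i = gen n i := by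
  unfold desc; rw [show i + 1 - i = 1 by omega]; simp

lemma ell_self (n i : ℕ) : ell n i i = gen n i := by
  unfold ell; rw [show i + 1 - i = 1 by omega]; simp [desc_self]

lemma asc_concat {n i j : ℕ} (h : i ≤ j + 1) :
    asc n i (j + 1) = asc n i j * gen n (j + 1) := by
  unfold asc
  rw [show j + 1 + 1 - i = (j + 1 - i) + 1 by omega, List.range'_concat,
    show i + 1 * (j + 1 - i) = j + 1 by omega]
  simp

lemma desc_concat {n i j : ℕ} (h : i ≤ j + 1) :
    desc n (j + 1) i = gen n (j + 1) * desc n j i := by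
  unfold desc
  rw [show j + 1 + 1 - i = (j + 1 - i) + 1 by omega, List.range'_concat,
    show i + 1 * (j + 1 - i) = j + 1 by omega]
  simp

lemma desc_cons {n i j : ℕ} (h : i ≤ j) :
    desc n j i = desc n j (i + 1) * gen n i := by
  unfold desc
  rw [show j + 1 - i = (j + 1 - (i + 1)) + 1 by omega, List.range'_succ]
  simp

lemma ell_concat {n i j : ℕ} (h : i ≤ j + 1) :
    ell n i (j + 1) = ell n i j * desc n (j + 1) i := by
  unfold ell
  rw [show j + 1 + 1 - i = (j + 1 - i) + 1 by omega, List.range'_concat,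
    show i + 1 * (j + 1 - i) = j + 1 by omega]
  simp

lemma asc_peel {n i j : ℕ} (hi : 1 ≤ i) (h : i ≤ j) :
    asc n i j = asc n i (j - 1) * gen n j := by
  cases j with
  | zero => omega
  | succ m =>
    rw [show m + 1 - 1 = m from rfl]
    rcases Nat.eq_or_lt_of_le h with h' | h'
    · rw [← h', asc_self, asc_eq_one (by omega), one_mul]
    · exact asc_concat (by omega)

lemma desc_peel {n i j : ℕ} (hi : 1 ≤ i) (h : i ≤ j) :
    desc n j i = gen n j * desc n (j - 1) i := by
  cases j with
  | zero => omega
  | succ m =>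
    rw [show m + 1 - 1 = m from rfl]
    rcases Nat.eq_or_lt_of_le h with h' | h'
    · rw [← h', desc_self, desc_eq_one (by omega), mul_one]
    · exact desc_concat (by omega)

/-! ### Commutation with far generators -/

lemma commute_gen_asc {n b i j : ℕ} (h : j + 2 ≤ b) : Commute (gen n b) (asc n i j) := by
  apply Commute.list_prod_right
  intro y hy
  simp only [List.mem_map, List.mem_range'_1] at hy
  obtain ⟨k, hk, rfl⟩ := hy
  exact (gen_comm k b (by omega)).symm

lemma commute_gen_desc {n b i j : ℕ} (h : j + 2 ≤ b) : Commute (gen n b) (desc n j i) := by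
  apply Commute.list_prod_right
  intro y hy
  simp only [List.mem_map, List.mem_reverse, List.mem_range'_1] at hy
  obtain ⟨k, hk, rfl⟩ := hy
  exact (gen_comm k b (by omega)).symm

lemma commute_gen_ell {n b i j : ℕ} (h : j + 2 ≤ b) : Commute (gen n b) (ell n i j) := by
  apply Commute.list_prod_right
  intro y hy
  simp only [List.mem_map, List.mem_range'_1] at hy
  obtain ⟨k, hk, rfl⟩ := hy
  exact commute_gen_desc (by omega)

/-! ### Shift lemmas -/

/-- `(s_i ⋯ s_j) s_k = s_{k+1} (s_i ⋯ s_j)` for `i ≤ k < j`. -/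
lemma asc_shift {n i : ℕ} (hi : 1 ≤ i) :
    ∀ j k : ℕ, i ≤ k → k < j → j ≤ n →
      asc n i j * gen n k = gen n (k + 1) * asc n i j := by
  intro j
  induction j with
  | zero => intro k _ h _; omega
  | succ j ih =>
    intro k hk1 hk2 hj
    rcases Nat.lt_or_ge k j with h | h
    · calc asc n i (j + 1) * gen n k
          = asc n i j * (gen n (j + 1) * gen n k) := by
            rw [asc_concat (by omega)]; simp only [mul_assoc]
        _ = asc n i j * (gen n k * gen n (j + 1)) := by
            rw [(gen_comm k (j + 1) (by omega)).eq]
        _ = (asc n i j * gen n k) * gen n (j + 1) := by simp only [mul_assoc]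
        _ = (gen n (k + 1) * asc n i j) * gen n (j + 1) := by
            rw [ih k hk1 h (by omega)]
        _ = gen n (k + 1) * asc n i (j + 1) := by
            rw [asc_concat (by omega)]; simp only [mul_assoc]
    · have hkj : k = j := by omega
      subst hkj
      calc asc n i (k + 1) * gen n k
          = asc n i (k - 1) * (gen n k * (gen n (k + 1) * gen n k)) := by
            rw [asc_concat (by omega), asc_peel hi hk1]; simp only [mul_assoc]
        _ = asc n i (k - 1) * (gen n (k + 1) * (gen n k * gen n (k + 1))) := by
            rw [gen_braid' k (by omega) hj]
        _ = gen n (k + 1) * (asc n i (k - 1) * (gen n k * gen n (k + 1))) := by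
            rw [← mul_assoc, ← (commute_gen_asc (i := i) (j := k - 1)
              (show (k - 1) + 2 ≤ k + 1 by omega)).eq, mul_assoc]
        _ = gen n (k + 1) * asc n i (k + 1) := by
            rw [asc_concat (by omega), asc_peel hi hk1]; simp only [mul_assoc]

/-- `(s_j ⋯ s_i) s_k = s_{k-1} (s_j ⋯ s_i)` for `i < k ≤ j`. -/
lemma desc_shift {n i : ℕ} (hi : 1 ≤ i) :
    ∀ j k : ℕ, i < k → k ≤ j → j ≤ n →
      desc n j i * gen n k = gen n (k - 1) * desc n j i := by
  intro j
  induction j with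
  | zero => intro k _ h _; omega
  | succ j ih =>
    intro k hk1 hk2 hj
    rcases Nat.lt_or_ge k (j + 1) with h | h
    · calc desc n (j + 1) i * gen n k
          = gen n (j + 1) * (desc n j i * gen n k) := by
            rw [desc_concat (by omega)]; simp only [mul_assoc]
        _ = gen n (j + 1) * (gen n (k - 1) * desc n j i) := by
            rw [ih k hk1 (by omega) (by omega)]
        _ = (gen n (j + 1) * gen n (k - 1)) * desc n j i := by simp only [mul_assoc]
        _ = (gen n (k - 1) * gen n (j + 1)) * desc n j i := by
            rw [(gen_comm (k - 1) (j + 1) (by omega)).eq]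
        _ = gen n (k - 1) * desc n (j + 1) i := by
            rw [desc_concat (by omega)]; simp only [mul_assoc]
    · have hkj : k = j + 1 := by omega
      subst hkj
      have hij : i ≤ j := by omega
      calc desc n (j + 1) i * gen n (j + 1)
          = gen n (j + 1) * (gen n j * (desc n (j - 1) i * gen n (j + 1))) := by
            rw [desc_concat (by omega), desc_peel hi hij]; simp only [mul_assoc]
        _ = gen n (j + 1) * (gen n j * (gen n (j + 1) * desc n (j - 1) i)) := by
            rw [← (commute_gen_desc (i := i) (j := j - 1)
              (show (j - 1) + 2 ≤ j + 1 by omega)).eq]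
        _ = (gen n (j + 1) * gen n j * gen n (j + 1)) * desc n (j - 1) i := by
            simp only [mul_assoc]
        _ = (gen n j * gen n (j + 1) * gen n j) * desc n (j - 1) i := by
            rw [gen_braid j (by omega) hj]
        _ = gen n j * desc n (j + 1) i := by
            rw [desc_concat (by omega), desc_peel hi hij]; simp only [mul_assoc]

/-- `(s_i ⋯ s_J)(s_K ⋯ s_a) = (s_{K+1} ⋯ s_{a+1})(s_i ⋯ s_J)` for `i ≤ a`, `K < J`. -/
lemma asc_desc_swap {n i J : ℕ} (hi : 1 ≤ i) (hJ : J ≤ n) :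
    ∀ K a : ℕ, i ≤ a → K < J →
      asc n i J * desc n K a = desc n (K + 1) (a + 1) * asc n i J := by
  intro K
  induction K with
  | zero =>
    intro a ha _
    rw [desc_eq_one (by omega), desc_eq_one (by omega), mul_one, one_mul]
  | succ K ih =>
    intro a ha hKJ
    rcases Nat.lt_or_ge (K + 1) a with h | h
    · rw [desc_eq_one h, desc_eq_one (by omega), mul_one, one_mul]
    · calc asc n i J * desc n (K + 1) a
          = (asc n i J * gen n (K + 1)) * desc n K a := by
            rw [desc_concat h]; simp only [mul_assoc]
        _ = (gen n (K + 1 + 1) * asc n i J) * desc n K a := by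
            rw [asc_shift hi J (K + 1) (by omega) hKJ hJ]
        _ = gen n (K + 1 + 1) * (desc n (K + 1) (a + 1) * asc n i J) := by
            rw [mul_assoc, ih a ha (by omega)]
        _ = desc n (K + 1 + 1) (a + 1) * asc n i J := by
            rw [desc_concat (i := a + 1) (j := K + 1) (by omega)]; simp only [mul_assoc]

/-! ### Structural identities for `ell` -/

/-- `ℓ_{i,j} = ℓ_{i+1,j} (s_i ⋯ s_j)`. -/
lemma ell_eq_ell_mul_asc {n i : ℕ} (hi : 1 ≤ i) :
    ∀ j : ℕ, i ≤ j → j ≤ n → ell n i j = ell n (i + 1) j * asc n i j := by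
  intro j
  induction j with
  | zero => intro h _; omega
  | succ j ih =>
    intro hij hj
    rcases Nat.eq_or_lt_of_le hij with h | h
    · rw [← h, ell_self, ell_eq_one (by omega), one_mul, asc_self]
    · have hij' : i ≤ j := by omega
      calc ell n i (j + 1)
          = ell n (i + 1) j * (asc n i j * gen n (j + 1) * desc n j i) := by
            rw [ell_concat (by omega), ih hij' (by omega), desc_concat (by omega)]
            simp only [mul_assoc]
        _ = ell n (i + 1) j * (asc n i (j + 1) * desc n j i) := by
            rw [← asc_concat (by omega)]
        _ = ell n (i + 1) j * (desc n (j + 1) (i + 1) * asc n i (j + 1)) := by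
            rw [asc_desc_swap hi hj j i le_rfl (by omega)]
        _ = ell n (i + 1) (j + 1) * asc n i (j + 1) := by
            rw [ell_concat (by omega)]; simp only [mul_assoc]

/-- `ℓ_{i,j+1} = (s_i ⋯ s_{j+1}) ℓ_{i,j}`. -/
lemma ell_eq_asc_mul_ell {n i : ℕ} (hi : 1 ≤ i) :
    ∀ j : ℕ, i ≤ j + 1 → ell n i (j + 1) = asc n i (j + 1) * ell n i j := by
  intro j
  induction j with
  | zero =>
    intro h
    have : i = 1 := by omega
    subst this
    rw [ell_self, ell_eq_one (by omega), asc_self, mul_one]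
  | succ j ih =>
    intro hij
    rcases Nat.eq_or_lt_of_le hij with h | h
    · rw [← h, ell_self, ell_eq_one (by omega), asc_self, mul_one]
    · have hij' : i ≤ j + 1 := by omega
      calc ell n i (j + 1 + 1)
          = asc n i (j + 1) * (ell n i j * (gen n (j + 1 + 1) * desc n (j + 1) i)) := by
            rw [ell_concat (by omega), ih hij', desc_concat (by omega)]
            simp only [mul_assoc]
        _ = asc n i (j + 1) * (gen n (j + 1 + 1) * ell n i (j + 1)) := by
            rw [← mul_assoc (ell n i j), ← (commute_gen_ell (i := i) (j := j)
              (show j + 2 ≤ j + 1 + 1 by omega)).eq, mul_assoc,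
              ← ell_concat (show i ≤ j + 1 by omega)]
        _ = asc n i (j + 1 + 1) * ell n i (j + 1) := by
            rw [asc_concat (i := i) (j := j + 1) (by omega)]; simp only [mul_assoc]

/-- flip: `ℓ_{i,j} s_k = s_{i+j-k} ℓ_{i,j}` for `i ≤ k ≤ j`. -/
lemma ell_flip {n i : ℕ} (hi : 1 ≤ i) :
    ∀ j k : ℕ, i ≤ k → k ≤ j → j ≤ n →
      ell n i j * gen n k = gen n (i + j - k) * ell n i j := by
  intro j
  induction j with
  | zero => intro k h1 h2 _; omega
  | succ j ih =>
    intro k hk1 hk2 hj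
    rcases Nat.eq_or_lt_of_le hk1 with hik | hik
    · -- k = i
      rw [← hik]
      rcases Nat.eq_or_lt_of_le hk2 with h' | h'
      · rw [← hik] at h'
        rw [← h', ell_self, show i + i - i = i from by omega]
      · have hkj : i ≤ j := by omega
        calc ell n i (j + 1) * gen n i
            = asc n i (j + 1) * (ell n i j * gen n i) := by
              rw [ell_eq_asc_mul_ell hi j (by omega)]; simp only [mul_assoc]
          _ = asc n i (j + 1) * (gen n (i + j - i) * ell n i j) := by
              rw [ih i le_rfl hkj (by omega)]
          _ = (asc n i (j + 1) * gen n j) * ell n i j := by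
              rw [show i + j - i = j from by omega]; simp only [mul_assoc]
          _ = (gen n (j + 1) * asc n i (j + 1)) * ell n i j := by
              rw [asc_shift hi (j + 1) j (by omega) (by omega) hj]
          _ = gen n (i + (j + 1) - i) * ell n i (j + 1) := by
              rw [show i + (j + 1) - i = j + 1 from by omega,
                ell_eq_asc_mul_ell hi j (by omega)]
              simp only [mul_assoc]
    · -- i < k
      calc ell n i (j + 1) * gen n k
          = ell n i j * (desc n (j + 1) i * gen n k) := by
            rw [ell_concat (by omega)]; simp only [mul_assoc]
        _ = ell n i j * (gen n (k - 1) * desc n (j + 1) i) := by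
            rw [desc_shift hi (j + 1) k hik hk2 hj]
        _ = (ell n i j * gen n (k - 1)) * desc n (j + 1) i := by
            simp only [mul_assoc]
        _ = (gen n (i + j - (k - 1)) * ell n i j) * desc n (j + 1) i := by
            rw [ih (k - 1) (by omega) (by omega) (by omega)]
        _ = gen n (i + (j + 1) - k) * ell n i (j + 1) := by
            rw [show i + j - (k - 1) = i + (j + 1) - k from by omega,
              ell_concat (show i ≤ j + 1 by omega)]
            simp only [mul_assoc]

/-- `ℓ_{i,j} (s_a ⋯ s_b) = (s_{i+j-a} ⋯ s_{i+j-b}) ℓ_{i,j}` for `i ≤ a ≤ b+1`, `b ≤ j`. -/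
lemma ell_mul_asc_eq {n i j : ℕ} (hi : 1 ≤ i) (hj : j ≤ n) :
    ∀ b a : ℕ, i ≤ a → a ≤ b + 1 → b ≤ j →
      ell n i j * asc n a b = desc n (i + j - a) (i + j - b) * ell n i j := by
  intro b
  induction b with
  | zero =>
    intro a ha hab _
    have ha1 : a = 1 := by omega
    subst ha1
    have hi1 : i = 1 := by omega
    subst hi1
    rw [asc_eq_one (by omega), desc_eq_one (by omega), mul_one, one_mul]
  | succ b ih =>
    intro a ha hab hbj
    rcases Nat.eq_or_lt_of_le hab with h | h
    · rw [h, asc_eq_one (by omega), desc_eq_one (by omega), mul_one, one_mul]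
    · have hab' : a ≤ b + 1 := by omega
      calc ell n i j * asc n a (b + 1)
          = (ell n i j * asc n a b) * gen n (b + 1) := by
            rw [asc_concat (by omega)]; simp only [mul_assoc]
        _ = desc n (i + j - a) (i + j - b) * (ell n i j * gen n (b + 1)) := by
            rw [ih a ha hab' (by omega)]; simp only [mul_assoc]
        _ = desc n (i + j - a) (i + j - b) * (gen n (i + j - (b + 1)) * ell n i j) := by
            rw [ell_flip hi j (b + 1) (by omega) hbj hj]
        _ = (desc n (i + j - a) ((i + j - (b + 1)) + 1) * gen n (i + j - (b + 1)))
              * ell n i j := by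
            rw [show i + j - b = (i + j - (b + 1)) + 1 from by omega]
            simp only [mul_assoc]
        _ = desc n (i + j - a) (i + j - (b + 1)) * ell n i j := by
            rw [← desc_cons (show i + j - (b + 1) ≤ i + j - a by omega)]

/-- `ℓ_{i,j} = (s_j ⋯ s_i) ℓ_{i+1,j}`. -/
lemma ell_eq_desc_mul_ell {n i j : ℕ} (hi : 1 ≤ i) (hij : i ≤ j) (hj : j ≤ n) :
    ell n i j = desc n j i * ell n (i + 1) j := by
  have h1 : ell n i j = ell n (i + 1) j * asc n i j := ell_eq_ell_mul_asc hi j hij hj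
  have h2 : ell n i j * asc n i j = desc n j i * ell n i j := by
    have := ell_mul_asc_eq hi hj j i le_rfl (by omega) le_rfl
    rwa [show i + j - i = j from by omega, show i + j - j = i from by omega] at this
  have h3 : desc n j i * ell n (i + 1) j * asc n i j = ell n i j * asc n i j := by
    rw [mul_assoc, ← h1, ← h2, h1]
  exact (mul_right_cancel h3).symm

/-- The full-loop element `A = (s_i ⋯ s_j)(s_j ⋯ s_i)` commutes with `s_k`, `i < k ≤ j`. -/
lemma commute_A_gen {n i j k : ℕ} (hi : 1 ≤ i) (hj : j ≤ n) (hk1 : i < k) (hk2 : k ≤ j) :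
    Commute (asc n i j * desc n j i) (gen n k) := by
  show _ = _
  rw [mul_assoc, desc_shift hi j k hk1 hk2 hj, ← mul_assoc,
    asc_shift hi j (k - 1) (by omega) (by omega) hj,
    show k - 1 + 1 = k from by omega, mul_assoc]

lemma commute_A_ell {n i j : ℕ} (hi : 1 ≤ i) (hij : i < j) (hj : j ≤ n) :
    Commute (asc n i j * desc n j i) (ell n (i + 1) j) := by
  apply Commute.list_prod_right
  intro y hy
  simp only [List.mem_map, List.mem_range'_1] at hy
  obtain ⟨k, hk, rfl⟩ := hy
  apply Commute.list_prod_right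
  intro z hz
  simp only [List.mem_map, List.mem_reverse, List.mem_range'_1] at hz
  obtain ⟨m, hm, rfl⟩ := hz
  exact commute_A_gen hi hj (by omega) (by omega)

/-- `ℓ_{i,j}² = ℓ_{i+1,j}² ⬝ (s_i ⋯ s_j)(s_j ⋯ s_i) = (s_i ⋯ s_j)(s_j ⋯ s_i) ⬝ ℓ_{i+1,j}²`
for `i < j`. -/
theorem ell_sq_factor' (n i j : ℕ) (hi : 1 ≤ i) (hij : i < j) (hj : j ≤ n) :
    (ell n i j) ^ 2 = (ell n (i + 1) j) ^ 2 * (asc n i j * desc n j i) ∧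
    (ell n i j) ^ 2 = asc n i j * desc n j i * (ell n (i + 1) j) ^ 2 := by
  have hA := commute_A_ell hi hij hj
  have key : (ell n i j) ^ 2 =
      ell n (i + 1) j * (asc n i j * desc n j i) * ell n (i + 1) j := by
    rw [sq]
    nth_rewrite 2 [ell_eq_desc_mul_ell hi (le_of_lt hij) hj]
    rw [ell_eq_ell_mul_asc hi j (le_of_lt hij) hj]
    simp only [mul_assoc]
  constructor
  · rw [key, mul_assoc, hA.eq, ← mul_assoc, ← sq]
  · rw [key, hA.symm.eq, mul_assoc, ← sq]

end BraidPaper
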